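/- Let $\Omega=(0,1)$ and let $v_1,v_2$ be classical solutions on $[0,T]\times\overline\Omega$ of $\partial_t v_i = v_{ixx} - u_i v_i$ with Neumann boundary conditions $v_{ix}(t,0)=v_{ix}(t,1)=0$ and $v_1(0,\cdot)=v_2(0,\cdot)$, where $u_1,u_2$ are continuous and nonnegative and $0 < v_i \le K$. Writing $u_1-u_2 = (w_{1x}-w_{2x}) - (v_1-v_2)$ with $w_i(t,x)=\int_0^x(u_i+v_i)dy$, one has for all $t\in[0,T]$: $\int_\Omega \tfrac12 (v_1-v_2)^2\,dx + \int_0^t\int_\Omega (v_{1x}-v_{2x})^2\,dx\,ds \le -\int_0^t\int_\Omega (w_{1x}-w_{2x}) v_1 (v_1-v_2)\,dx\,ds + \int_0^t\int_\Omega v_1 (v_1-v_2)^2\,dx\,ds - \int_0^t\int_\Omega u_2 (v_1-v_2)^2\,dx\,ds$. -/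

import Mathlib

/-!
Put `d = v₁ - v₂`. For each `x`, since `d(0, x) = 0`, the fundamental theorem of calculus in time
gives `½ d(t, x)² = ∫₀ᵗ d ∂ₛd ds`, where `∂ₛd = d_xx - (u₁v₁ - u₂v₂)`. Integrating in `x` and
exchanging the order of integration, the term `d d_xx` contributes `-∫∫ d_x²` after an
integration by parts whose boundary terms vanish by the Neumann conditions, while
`u₁v₁ - u₂v₂ = ((w₁ₓ - w₂ₓ) - d) v₁ + u₂ d` turns `-d (u₁v₁ - u₂v₂)` into the right-hand side.
So the inequality actually holds with equality.

All integrands are continuous on the closed rectangle: `vᵢ` is continuous in time and uniformly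
Lipschitz in space, its space derivative being bounded on the compact rectangle.
-/

open MeasureTheory Set Function

theorem continuousOn_uncurry_of_hasDerivWithinAt_of_continuousOn {α E : Type*}
    [TopologicalSpace α] [NormedAddCommGroup E] [NormedSpace ℝ E]
    {f f' : α → ℝ → E} {s : Set α} {t : Set ℝ}
    (hs : IsCompact s) (ht : IsCompact t) (htc : Convex ℝ t)
    (hf : ∀ a ∈ s, ∀ y ∈ t, HasDerivWithinAt (f a) (f' a y) t y)
    (hf' : ContinuousOn f'.uncurry (s ×ˢ t))
    (hcont : ∀ y ∈ t, ContinuousOn (fun a => f a y) s) :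
    ContinuousOn f.uncurry (s ×ˢ t) := by
  obtain ⟨C, hC⟩ := (hs.prod ht).exists_bound_of_continuousOn hf'
  refine continuousOn_prod_of_continuousOn_lipschitzOnWith' f.uncurry C.toNNReal
    (fun a ha => htc.lipschitzOnWith_of_nnnorm_hasDerivWithin_le (hf a ha) fun y hy => ?_) hcont
  rw [← NNReal.coe_le_coe, coe_nnnorm]
  exact (hC (a, y) ⟨ha, hy⟩).trans (Real.le_coe_toNNReal C)

section Rectangle

variable {E : Type*} [NormedAddCommGroup E] {a b c d : ℝ} {F G : ℝ → ℝ → E}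

theorem ContinuousOn.integrableOn_uIoc_prod
    (hF : ContinuousOn F.uncurry (uIcc a b ×ˢ uIcc c d)) :
    IntegrableOn F.uncurry (uIoc a b ×ˢ uIoc c d) :=
  (hF.integrableOn_compact (isCompact_uIcc.prod isCompact_uIcc)).mono_set
    (prod_mono uIoc_subset_uIcc uIoc_subset_uIcc)

variable [NormedSpace ℝ E]

theorem ContinuousOn.intervalIntegrable_intervalIntegral
    (hF : ContinuousOn F.uncurry (uIcc a b ×ˢ uIcc c d)) :
    IntervalIntegrable (fun s => ∫ x in c..d, F s x) volume a b := by
  have h := hF.integrableOn_uIoc_prod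
  rw [IntegrableOn, Measure.volume_eq_prod, ← Measure.prod_restrict] at h
  rw [intervalIntegrable_iff]
  simp_rw [intervalIntegral.intervalIntegral_eq_integral_uIoc]
  exact h.integral_prod_left.smul _

theorem intervalIntegral_intervalIntegral_add
    (hF : ContinuousOn F.uncurry (uIcc a b ×ˢ uIcc c d))
    (hG : ContinuousOn G.uncurry (uIcc a b ×ˢ uIcc c d)) :
    ∫ s in a..b, ∫ x in c..d, (F s x + G s x) =
      (∫ s in a..b, ∫ x in c..d, F s x) + ∫ s in a..b, ∫ x in c..d, G s x := by
  rw [← intervalIntegral.integral_add hF.intervalIntegrable_intervalIntegral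
    hG.intervalIntegrable_intervalIntegral]
  exact intervalIntegral.integral_congr fun s hs => intervalIntegral.integral_add
    (hF.uncurry_left s hs).intervalIntegrable (hG.uncurry_left s hs).intervalIntegrable

theorem intervalIntegral_intervalIntegral_sub
    (hF : ContinuousOn F.uncurry (uIcc a b ×ˢ uIcc c d))
    (hG : ContinuousOn G.uncurry (uIcc a b ×ˢ uIcc c d)) :
    ∫ s in a..b, ∫ x in c..d, (F s x - G s x) =
      (∫ s in a..b, ∫ x in c..d, F s x) - ∫ s in a..b, ∫ x in c..d, G s x := by
  rw [← intervalIntegral.integral_sub hF.intervalIntegrable_intervalIntegral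
    hG.intervalIntegrable_intervalIntegral]
  exact intervalIntegral.integral_congr fun s hs => intervalIntegral.integral_sub
    (hF.uncurry_left s hs).intervalIntegrable (hG.uncurry_left s hs).intervalIntegrable

theorem intervalIntegral_intervalIntegral_swap_of_continuousOn
    (hF : ContinuousOn F.uncurry (uIcc a b ×ˢ uIcc c d)) :
    ∫ x in c..d, ∫ s in a..b, F s x = ∫ s in a..b, ∫ x in c..d, F s x :=
  intervalIntegral_intervalIntegral_swap <|
    ContinuousOn.integrableOn_uIoc_prod (F := fun x s => F s x)
      (hF.comp continuous_swap.continuousOn (mapsTo_swap_prod _ _))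

end Rectangle

section Deriv

variable {a b : ℝ} {f f' f'' : ℝ → ℝ}

theorem integral_mul_deriv_eq_sq_sub_sq
    (hf : ∀ x ∈ uIcc a b, HasDerivWithinAt f (f' x) (uIcc a b) x)
    (hf' : IntervalIntegrable f' volume a b) :
    ∫ x in a..b, f x * f' x = (f b ^ 2 - f a ^ 2) / 2 := by
  have h := intervalIntegral.integral_deriv_mul_eq_sub_of_hasDerivWithinAt hf hf hf' hf'
  calc ∫ x in a..b, f x * f' x = ∫ x in a..b, (f' x * f x + f x * f' x) / 2 :=
        intervalIntegral.integral_congr fun x _ => by ring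
    _ = (f b ^ 2 - f a ^ 2) / 2 := by rw [intervalIntegral.integral_div, h]; ring

theorem integral_sq_deriv_add_mul_deriv_deriv_eq_zero
    (hf : ∀ x ∈ uIcc a b, HasDerivWithinAt f (f' x) (uIcc a b) x)
    (hf' : ∀ x ∈ uIcc a b, HasDerivWithinAt f' (f'' x) (uIcc a b) x)
    (hf'' : IntervalIntegrable f'' volume a b) (ha : f' a = 0) (hb : f' b = 0) :
    ∫ x in a..b, (f' x ^ 2 + f x * f'' x) = 0 := by
  have hf'i : IntervalIntegrable f' volume a b :=
    ContinuousOn.intervalIntegrable fun x hx => (hf' x hx).continuousWithinAt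
  simpa [ha, hb, sq] using
    intervalIntegral.integral_deriv_mul_eq_sub_of_hasDerivWithinAt hf hf' hf'i hf''

end Deriv

theorem integral_half_sq_eq_integral_integral_mul_deriv {w w' : ℝ → ℝ → ℝ} {a b c d : ℝ}
    (hw : ∀ x ∈ uIcc c d, ∀ s ∈ uIcc a b,
      HasDerivWithinAt (fun τ => w τ x) (w' s x) (uIcc a b) s)
    (hwc : ContinuousOn w.uncurry (uIcc a b ×ˢ uIcc c d))
    (hw'c : ContinuousOn w'.uncurry (uIcc a b ×ˢ uIcc c d))
    (hwa : ∀ x ∈ uIcc c d, w a x = 0) :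
    ∫ x in c..d, 1 / 2 * w b x ^ 2 = ∫ s in a..b, ∫ x in c..d, w s x * w' s x := by
  calc ∫ x in c..d, 1 / 2 * w b x ^ 2 = ∫ x in c..d, ∫ s in a..b, w s x * w' s x :=
        intervalIntegral.integral_congr fun x hx => by
          rw [integral_mul_deriv_eq_sq_sub_sq (hw x hx)
            (hw'c.uncurry_right x hx).intervalIntegrable, hwa x hx]
          ring
    _ = ∫ s in a..b, ∫ x in c..d, w s x * w' s x :=
        intervalIntegral_intervalIntegral_swap_of_continuousOn (F := fun s x => w s x * w' s x)
          (hwc.mul hw'c)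

theorem stmt13_general (T : ℝ) (u1 u2 v1 v2 v1x v2x v1xx v2xx : ℝ → ℝ → ℝ)
    (hu1_cont : ContinuousOn (fun p : ℝ × ℝ => u1 p.1 p.2) (Set.Icc 0 T ×ˢ Set.Icc 0 1))
    (hu2_cont : ContinuousOn (fun p : ℝ × ℝ => u2 p.1 p.2) (Set.Icc 0 T ×ˢ Set.Icc 0 1))
    -- classical regularity of v₁, v₂
    (hv1x : ∀ t ∈ Set.Icc (0:ℝ) T, ∀ x ∈ Set.Icc (0:ℝ) 1,
      HasDerivWithinAt (v1 t) (v1x t x) (Set.Icc 0 1) x)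
    (hv2x : ∀ t ∈ Set.Icc (0:ℝ) T, ∀ x ∈ Set.Icc (0:ℝ) 1,
      HasDerivWithinAt (v2 t) (v2x t x) (Set.Icc 0 1) x)
    (hv1xx : ∀ t ∈ Set.Icc (0:ℝ) T, ∀ x ∈ Set.Icc (0:ℝ) 1,
      HasDerivWithinAt (v1x t) (v1xx t x) (Set.Icc 0 1) x)
    (hv2xx : ∀ t ∈ Set.Icc (0:ℝ) T, ∀ x ∈ Set.Icc (0:ℝ) 1,
      HasDerivWithinAt (v2x t) (v2xx t x) (Set.Icc 0 1) x)
    (hv1x_cont : ContinuousOn (fun p : ℝ × ℝ => v1x p.1 p.2) (Set.Icc 0 T ×ˢ Set.Icc 0 1))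
    (hv2x_cont : ContinuousOn (fun p : ℝ × ℝ => v2x p.1 p.2) (Set.Icc 0 T ×ˢ Set.Icc 0 1))
    (hv1xx_cont : ContinuousOn (fun p : ℝ × ℝ => v1xx p.1 p.2) (Set.Icc 0 T ×ˢ Set.Icc 0 1))
    (hv2xx_cont : ContinuousOn (fun p : ℝ × ℝ => v2xx p.1 p.2) (Set.Icc 0 T ×ˢ Set.Icc 0 1))
    -- the PDEs `∂ₜ vᵢ = vᵢₓₓ - uᵢ vᵢ`
    (hv1t : ∀ t ∈ Set.Icc (0:ℝ) T, ∀ x ∈ Set.Icc (0:ℝ) 1,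
      HasDerivWithinAt (fun τ => v1 τ x) (v1xx t x - u1 t x * v1 t x) (Set.Icc 0 T) t)
    (hv2t : ∀ t ∈ Set.Icc (0:ℝ) T, ∀ x ∈ Set.Icc (0:ℝ) 1,
      HasDerivWithinAt (fun τ => v2 τ x) (v2xx t x - u2 t x * v2 t x) (Set.Icc 0 T) t)
    -- Neumann boundary conditions and identical initial data
    (hbc : ∀ t ∈ Set.Icc (0:ℝ) T,
      v1x t 0 = 0 ∧ v1x t 1 = 0 ∧ v2x t 0 = 0 ∧ v2x t 1 = 0)
    (hinit : ∀ x ∈ Set.Icc (0:ℝ) 1, v1 0 x = v2 0 x) :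
    -- conclusion, with `wᵢₓ = uᵢ + vᵢ`
    ∀ t ∈ Set.Icc (0:ℝ) T,
      (∫ x in (0:ℝ)..1, (1/2) * (v1 t x - v2 t x)^2)
        + (∫ s in (0:ℝ)..t, ∫ x in (0:ℝ)..1, (v1x s x - v2x s x)^2)
      ≤ -(∫ s in (0:ℝ)..t, ∫ x in (0:ℝ)..1,
            ((u1 s x + v1 s x) - (u2 s x + v2 s x)) * v1 s x * (v1 s x - v2 s x))
        + (∫ s in (0:ℝ)..t, ∫ x in (0:ℝ)..1, v1 s x * (v1 s x - v2 s x)^2)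
        - (∫ s in (0:ℝ)..t, ∫ x in (0:ℝ)..1, u2 s x * (v1 s x - v2 s x)^2) := by
  rintro t ⟨ht0, htT⟩
  have hI : uIcc 0 t ⊆ Icc 0 T := by rw [uIcc_of_le ht0]; exact Icc_subset_Icc_right htT
  have hJ : uIcc (0:ℝ) 1 = Icc 0 1 := uIcc_of_le zero_le_one
  have hR : uIcc 0 t ×ˢ uIcc (0:ℝ) 1 ⊆ Icc 0 T ×ˢ Icc 0 1 := prod_mono hI hJ.le
  have hv1_cont : ContinuousOn (fun p : ℝ × ℝ => v1 p.1 p.2) (Icc 0 T ×ˢ Icc 0 1) :=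
    continuousOn_uncurry_of_hasDerivWithinAt_of_continuousOn isCompact_Icc isCompact_Icc
      (convex_Icc 0 1) hv1x hv1x_cont fun x hx s hs => (hv1t s hs x hx).continuousWithinAt
  have hv2_cont : ContinuousOn (fun p : ℝ × ℝ => v2 p.1 p.2) (Icc 0 T ×ˢ Icc 0 1) :=
    continuousOn_uncurry_of_hasDerivWithinAt_of_continuousOn isCompact_Icc isCompact_Icc
      (convex_Icc 0 1) hv2x hv2x_cont fun x hx s hs => (hv2t s hs x hx).continuousWithinAt
  have htime := integral_half_sq_eq_integral_integral_mul_deriv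
    (w := fun s x => v1 s x - v2 s x)
    (w' := fun s x => (v1xx s x - u1 s x * v1 s x) - (v2xx s x - u2 s x * v2 s x))
    (fun x hx s hs => ((hv1t s (hI hs) x (hJ ▸ hx)).sub (hv2t s (hI hs) x (hJ ▸ hx))).mono hI)
    (ContinuousOn.mono (by fun_prop) hR) (ContinuousOn.mono (by fun_prop) hR)
    fun x hx => sub_eq_zero.mpr (hinit x (hJ ▸ hx))
  have hspace : ∀ s ∈ uIcc 0 t, ∫ x in (0:ℝ)..1,
      ((v1x s x - v2x s x)^2 + (v1 s x - v2 s x) * (v1xx s x - v2xx s x)) = 0 := by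
    intro s hs
    obtain ⟨h1l, h1r, h2l, h2r⟩ := hbc s (hI hs)
    rw [← hJ] at hv1x hv2x hv1xx hv2xx
    refine integral_sq_deriv_add_mul_deriv_deriv_eq_zero (f := fun x => v1 s x - v2 s x)
      (fun x hx => (hv1x s (hI hs) x hx).sub (hv2x s (hI hs) x hx))
      (fun x hx => (hv1xx s (hI hs) x hx).sub (hv2xx s (hI hs) x hx)) ?_
      (by simp [h1l, h2l]) (by simp [h1r, h2r])
    exact (hJ ▸ (hv1xx_cont.uncurry_left s (hI hs)).sub
      (hv2xx_cont.uncurry_left s (hI hs))).intervalIntegrable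
  have hsplit : ∀ s x, (v1 s x - v2 s x) *
      ((v1xx s x - u1 s x * v1 s x) - (v2xx s x - u2 s x * v2 s x)) =
      -(((u1 s x + v1 s x) - (u2 s x + v2 s x)) * v1 s x * (v1 s x - v2 s x))
        + v1 s x * (v1 s x - v2 s x)^2 - u2 s x * (v1 s x - v2 s x)^2
        + ((v1x s x - v2x s x)^2 + (v1 s x - v2 s x) * (v1xx s x - v2xx s x))
        - (v1x s x - v2x s x)^2 := fun s x => by ring
  rw [htime]
  simp only [hsplit]
  rw [intervalIntegral_intervalIntegral_sub, intervalIntegral_intervalIntegral_add,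
    intervalIntegral_intervalIntegral_sub, intervalIntegral_intervalIntegral_add,
    intervalIntegral.integral_congr hspace]
  · simp only [intervalIntegral.integral_neg, intervalIntegral.integral_zero]
    linarith
  all_goals exact ContinuousOn.mono (by fun_prop) hR

/-- Energy inequality for the difference of the nutrient equations (Step 2 of Lemma 4). -/
theorem stmt13 (T K : ℝ) (hT : 0 < T) (u1 u2 v1 v2 v1x v2x v1xx v2xx : ℝ → ℝ → ℝ)
    (hu1_cont : ContinuousOn (fun p : ℝ × ℝ => u1 p.1 p.2) (Set.Icc 0 T ×ˢ Set.Icc 0 1))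
    (hu2_cont : ContinuousOn (fun p : ℝ × ℝ => u2 p.1 p.2) (Set.Icc 0 T ×ˢ Set.Icc 0 1))
    (hu1_nonneg : ∀ t ∈ Set.Icc (0:ℝ) T, ∀ x ∈ Set.Icc (0:ℝ) 1, 0 ≤ u1 t x)
    (hu2_nonneg : ∀ t ∈ Set.Icc (0:ℝ) T, ∀ x ∈ Set.Icc (0:ℝ) 1, 0 ≤ u2 t x)
    (hv1_pos : ∀ t ∈ Set.Icc (0:ℝ) T, ∀ x ∈ Set.Icc (0:ℝ) 1, 0 < v1 t x ∧ v1 t x ≤ K)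
    (hv2_pos : ∀ t ∈ Set.Icc (0:ℝ) T, ∀ x ∈ Set.Icc (0:ℝ) 1, 0 < v2 t x ∧ v2 t x ≤ K)
    -- classical regularity of v₁, v₂
    (hv1x : ∀ t ∈ Set.Icc (0:ℝ) T, ∀ x ∈ Set.Icc (0:ℝ) 1,
      HasDerivWithinAt (v1 t) (v1x t x) (Set.Icc 0 1) x)
    (hv2x : ∀ t ∈ Set.Icc (0:ℝ) T, ∀ x ∈ Set.Icc (0:ℝ) 1,
      HasDerivWithinAt (v2 t) (v2x t x) (Set.Icc 0 1) x)
    (hv1xx : ∀ t ∈ Set.Icc (0:ℝ) T, ∀ x ∈ Set.Icc (0:ℝ) 1,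
      HasDerivWithinAt (v1x t) (v1xx t x) (Set.Icc 0 1) x)
    (hv2xx : ∀ t ∈ Set.Icc (0:ℝ) T, ∀ x ∈ Set.Icc (0:ℝ) 1,
      HasDerivWithinAt (v2x t) (v2xx t x) (Set.Icc 0 1) x)
    (hv1x_cont : ContinuousOn (fun p : ℝ × ℝ => v1x p.1 p.2) (Set.Icc 0 T ×ˢ Set.Icc 0 1))
    (hv2x_cont : ContinuousOn (fun p : ℝ × ℝ => v2x p.1 p.2) (Set.Icc 0 T ×ˢ Set.Icc 0 1))
    (hv1xx_cont : ContinuousOn (fun p : ℝ × ℝ => v1xx p.1 p.2) (Set.Icc 0 T ×ˢ Set.Icc 0 1))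
    (hv2xx_cont : ContinuousOn (fun p : ℝ × ℝ => v2xx p.1 p.2) (Set.Icc 0 T ×ˢ Set.Icc 0 1))
    -- the PDEs `∂ₜ vᵢ = vᵢₓₓ - uᵢ vᵢ`
    (hv1t : ∀ t ∈ Set.Icc (0:ℝ) T, ∀ x ∈ Set.Icc (0:ℝ) 1,
      HasDerivWithinAt (fun τ => v1 τ x) (v1xx t x - u1 t x * v1 t x) (Set.Icc 0 T) t)
    (hv2t : ∀ t ∈ Set.Icc (0:ℝ) T, ∀ x ∈ Set.Icc (0:ℝ) 1,
      HasDerivWithinAt (fun τ => v2 τ x) (v2xx t x - u2 t x * v2 t x) (Set.Icc 0 T) t)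
    -- Neumann boundary conditions and identical initial data
    (hbc : ∀ t ∈ Set.Icc (0:ℝ) T,
      v1x t 0 = 0 ∧ v1x t 1 = 0 ∧ v2x t 0 = 0 ∧ v2x t 1 = 0)
    (hinit : ∀ x ∈ Set.Icc (0:ℝ) 1, v1 0 x = v2 0 x) :
    -- conclusion, with `wᵢₓ = uᵢ + vᵢ`
    ∀ t ∈ Set.Icc (0:ℝ) T,
      (∫ x in (0:ℝ)..1, (1/2) * (v1 t x - v2 t x)^2)
        + (∫ s in (0:ℝ)..t, ∫ x in (0:ℝ)..1, (v1x s x - v2x s x)^2)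
      ≤ -(∫ s in (0:ℝ)..t, ∫ x in (0:ℝ)..1,
            ((u1 s x + v1 s x) - (u2 s x + v2 s x)) * v1 s x * (v1 s x - v2 s x))
        + (∫ s in (0:ℝ)..t, ∫ x in (0:ℝ)..1, v1 s x * (v1 s x - v2 s x)^2)
        - (∫ s in (0:ℝ)..t, ∫ x in (0:ℝ)..1, u2 s x * (v1 s x - v2 s x)^2) :=
  stmt13_general T u1 u2 v1 v2 v1x v2x v1xx v2xx hu1_cont hu2_cont hv1x hv2x hv1xx hv2xx hv1x_cont
    hv2x_cont hv1xx_cont hv2xx_cont hv1t hv2t hbc hinit
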